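/- Let f be a ratio-balanced maximum flow, assume A is nonempty, let R = max_{j∈A} r_j^f and assume R > 0. Let A' = {j ∈ A : r_j^f = R} and S' = {i ∈ S : f_{ij} > 0 for some j ∈ A'}. Then the total value of the securities in S' equals the total flow into A': ∑_{i∈S'} v_i = (1 − R) · ∑_{j∈A'} e_j. -/

import Mathlib

open Finset
open scoped Classical

variable {S A : Type*} [Fintype S] [Fintype A]

/-- A feasible flow: nonnegative on edges, zero off edges, outflow of each security
bounded by its value, inflow of each account bounded by its exposure. -/
def Feasible (E : Finset (S × A)) (v : S → ℝ) (e : A → ℝ) (f : S → A → ℝ) : Prop :=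
  (∀ i j, (i, j) ∈ E → 0 ≤ f i j) ∧
  (∀ i j, (i, j) ∉ E → f i j = 0) ∧
  (∀ i : S, ∑ j ∈ Finset.univ.filter (fun j => (i, j) ∈ E), f i j ≤ v i) ∧
  (∀ j : A, ∑ i ∈ Finset.univ.filter (fun i => (i, j) ∈ E), f i j ≤ e j)

/-- The value of a flow: total flow on all edges. -/
noncomputable def flowValue (E : Finset (S × A)) (f : S → A → ℝ) : ℝ :=
  ∑ p ∈ E, f p.1 p.2

/-- The risk ratio of account `j` under a flow `f`. -/
noncomputable def riskRatio (E : Finset (S × A)) (e : A → ℝ) (f : S → A → ℝ) (j : A) : ℝ :=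
  (e j - ∑ i ∈ Finset.univ.filter (fun i => (i, j) ∈ E), f i j) / e j

/-- A maximum flow: feasible, with value maximal among feasible flows. -/
def IsMaxFlow (E : Finset (S × A)) (v : S → ℝ) (e : A → ℝ) (f : S → A → ℝ) : Prop :=
  Feasible E v e f ∧ ∀ g : S → A → ℝ, Feasible E v e g → flowValue E g ≤ flowValue E f

/-- The ratio constraint: if `f` sends positive flow from `i` to `j` and `i` could
also be used for `l`, then the risk ratio of `j` is at least that of `l`. -/
def RatioConstraint (E : Finset (S × A)) (e : A → ℝ) (f : S → A → ℝ) : Prop :=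
  ∀ i j l, (i, j) ∈ E → 0 < f i j → (i, l) ∈ E →
    riskRatio E e f l ≤ riskRatio E e f j

/-- A ratio-balanced (maximum) flow. -/
def RatioBalanced (E : Finset (S × A)) (v : S → ℝ) (e : A → ℝ) (f : S → A → ℝ) : Prop :=
  IsMaxFlow E v e f ∧ RatioConstraint E e f

/-- The weighted sum of squared risk ratios `∑ j, e j * (r_j^f)^2`. -/
noncomputable def objective (E : Finset (S × A)) (e : A → ℝ) (f : S → A → ℝ) : ℝ :=
  ∑ j : A, e j * (riskRatio E e f j) ^ 2

/-- An MWSR flow: a feasible flow minimizing the weighted sum of squared risk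
ratios among all feasible flows. -/
def MWSR (E : Finset (S × A)) (v : S → ℝ) (e : A → ℝ) (f : S → A → ℝ) : Prop :=
  Feasible E v e f ∧ ∀ g : S → A → ℝ, Feasible E v e g → objective E e f ≤ objective E e g

/-!
Let `A'` be the accounts of maximal risk ratio `R > 0` and `S'` the securities feeding them.
By the ratio constraint, a security feeding some account of `A'` sends flow only into `A'`.
Every account of `A'` has slack `R e_j > 0`, so by maximality each security of `S'` is
saturated (otherwise one could push more flow along an edge into `A'`). Hence the flow out of
`S'` is `∑_{S'} v_i`, the flow into `A'` is `(1 - R) ∑_{A'} e_j`, and these are the same flow.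
-/

noncomputable def outflow (E : Finset (S × A)) (f : S → A → ℝ) (i : S) : ℝ :=
  ∑ j ∈ univ.filter (fun j => (i, j) ∈ E), f i j

noncomputable def inflow (E : Finset (S × A)) (f : S → A → ℝ) (j : A) : ℝ :=
  ∑ i ∈ univ.filter (fun i => (i, j) ∈ E), f i j

section Flow

variable {E : Finset (S × A)} {v : S → ℝ} {e : A → ℝ} {f : S → A → ℝ}

noncomputable def augment (f : S → A → ℝ) (i : S) (j : A) (ε : ℝ) : S → A → ℝ :=
  fun a b => f a b + if (a, b) = (i, j) then ε else 0

omit [Fintype S] in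
theorem outflow_augment {i : S} {j : A} (hij : (i, j) ∈ E) (ε : ℝ) (a : S) :
    outflow E (augment f i j ε) a = outflow E f a + if a = i then ε else 0 := by
  simp only [outflow, augment, sum_add_distrib, Prod.mk.injEq]
  split_ifs with ha
  · subst ha
    simp [hij]
  · simp [ha]

omit [Fintype A] in
theorem inflow_augment {i : S} {j : A} (hij : (i, j) ∈ E) (ε : ℝ) (b : A) :
    inflow E (augment f i j ε) b = inflow E f b + if b = j then ε else 0 := by
  simp only [inflow, augment, sum_add_distrib, Prod.mk.injEq]
  split_ifs with hb
  · subst hb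
    simp [hij]
  · simp [hb]

omit [Fintype S] [Fintype A] in
theorem flowValue_augment {i : S} {j : A} (hij : (i, j) ∈ E) (ε : ℝ) :
    flowValue E (augment f i j ε) = flowValue E f + ε := by
  simp only [flowValue, augment, sum_add_distrib, Prod.mk.eta, sum_ite_eq', if_pos hij]

namespace Feasible

theorem nonneg (hf : Feasible E v e f) (i : S) (j : A) : 0 ≤ f i j := by
  by_cases h : (i, j) ∈ E
  · exact hf.1 i j h
  · exact (hf.2.1 i j h).ge

theorem mem_of_pos (hf : Feasible E v e f) {i : S} {j : A} (h : 0 < f i j) : (i, j) ∈ E :=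
  by_contra fun hE => h.ne' (hf.2.1 i j hE)

theorem outflow_eq_sum (hf : Feasible E v e f) (i : S) : outflow E f i = ∑ j, f i j :=
  sum_filter_of_ne fun j _ h => by_contra fun hE => h (hf.2.1 i j hE)

theorem inflow_eq_sum (hf : Feasible E v e f) (j : A) : inflow E f j = ∑ i, f i j :=
  sum_filter_of_ne fun i _ h => by_contra fun hE => h (hf.2.1 i j hE)

theorem augment (hf : Feasible E v e f) {i : S} {j : A} (hij : (i, j) ∈ E) {ε : ℝ}
    (hε : 0 ≤ ε) (hεv : ε ≤ v i - outflow E f i) (hεe : ε ≤ e j - inflow E f j) :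
    Feasible E v e (augment f i j ε) := by
  obtain ⟨hnn, hzero, hout, hin⟩ := hf
  refine ⟨fun a b hab => ?_, fun a b hab => ?_, fun a => ?_, fun b => ?_⟩
  · exact add_nonneg (hnn a b hab) (by split_ifs <;> simp [hε])
  · have hne : (a, b) ≠ (i, j) := fun h => hab (h ▸ hij)
    show f a b + (if (a, b) = (i, j) then ε else 0) = 0
    rw [if_neg hne, hzero a b hab, add_zero]
  · change outflow E _ a ≤ v a
    rw [outflow_augment hij]
    split_ifs with ha
    · subst ha; linarith
    · exact (add_zero _).trans_le (hout a)
  · change inflow E _ b ≤ e b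
    rw [inflow_augment hij]
    split_ifs with hb
    · subst hb; linarith
    · exact (add_zero _).trans_le (hin b)

end Feasible

theorem IsMaxFlow.outflow_eq_of_inflow_lt (hf : IsMaxFlow E v e f) {i : S} {j : A}
    (hij : (i, j) ∈ E) (hj : inflow E f j < e j) : outflow E f i = v i := by
  refine le_antisymm (hf.1.2.2.1 i) (not_lt.1 fun hi => ?_)
  set ε := min (v i - outflow E f i) (e j - inflow E f j)
  have hε : 0 < ε := lt_min (by linarith) (by linarith)
  have hle := hf.2 _ (hf.1.augment hij hε.le (min_le_left _ _) (min_le_right _ _))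
  rw [flowValue_augment hij] at hle
  linarith

omit [Fintype A] in
theorem riskRatio_eq_iff {j : A} (hj : 0 < e j) (R : ℝ) :
    riskRatio E e f j = R ↔ inflow E f j = (1 - R) * e j := by
  rw [riskRatio, div_eq_iff hj.ne']
  change e j - inflow E f j = _ ↔ _
  constructor <;> intro h <;> linarith

theorem RatioConstraint.riskRatio_eq_of_pos (hrc : RatioConstraint E e f)
    (hf : Feasible E v e f) {R : ℝ} (hR : ∀ l, riskRatio E e f l ≤ R) {i : S} {j₀ j : A}
    (hj₀ : riskRatio E e f j₀ = R) (h₀ : 0 < f i j₀) (h : 0 < f i j) :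
    riskRatio E e f j = R :=
  le_antisymm (hR j) (hj₀ ▸ hrc i j j₀ (hf.mem_of_pos h) h (hf.mem_of_pos h₀))

end Flow

theorem Sprime_value_eq_Aprime_inflow_general [Nonempty A] (E : Finset (S × A)) (v : S → ℝ) (e : A → ℝ)
    (he : ∀ j, 0 < e j)
    (f : S → A → ℝ) (hf : RatioBalanced E v e f)
    (R : ℝ) (hRdef : R = Finset.univ.sup' Finset.univ_nonempty (riskRatio E e f))
    (hRpos : 0 < R) :
    ∑ i ∈ Finset.univ.filter
        (fun i : S => ∃ j : A, riskRatio E e f j = R ∧ 0 < f i j), v i =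
      (1 - R) * ∑ j ∈ Finset.univ.filter (fun j : A => riskRatio E e f j = R), e j := by
  obtain ⟨hmax, hrc⟩ := hf
  have hfeas := hmax.1
  have hR : ∀ l, riskRatio E e f l ≤ R := fun l => hRdef ▸ le_sup' _ (mem_univ l)
  have hsat : ∀ i, (∃ j, riskRatio E e f j = R ∧ 0 < f i j) →
      v i = ∑ j ∈ univ.filter (fun j => riskRatio E e f j = R), f i j := by
    rintro i ⟨j₀, hj₀, h₀⟩
    have hslack : inflow E f j₀ < e j₀ := by
      rw [(riskRatio_eq_iff (he j₀) R).1 hj₀]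
      linarith [mul_pos hRpos (he j₀)]
    rw [← hmax.outflow_eq_of_inflow_lt (hfeas.mem_of_pos h₀) hslack, hfeas.outflow_eq_sum]
    exact (sum_filter_of_ne fun j _ h => hrc.riskRatio_eq_of_pos hfeas hR hj₀ h₀
      ((hfeas.nonneg i j).lt_of_ne' h)).symm
  have hin : ∀ j, riskRatio E e f j = R →
      ∑ i ∈ univ.filter (fun i => ∃ j, riskRatio E e f j = R ∧ 0 < f i j), f i j
        = (1 - R) * e j := by
    intro j hj
    rw [← (riskRatio_eq_iff (he j) R).1 hj, hfeas.inflow_eq_sum]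
    exact sum_filter_of_ne fun i _ h => ⟨j, hj, (hfeas.nonneg i j).lt_of_ne' h⟩
  rw [sum_congr rfl fun i hi => hsat i (mem_filter.1 hi).2, sum_comm,
    sum_congr rfl fun j hj => hin j (mem_filter.1 hj).2, mul_sum]

/-- the total value of the securities in `S'` equals the total
flow into the least-secured accounts `A'`. -/
theorem Sprime_value_eq_Aprime_inflow [Nonempty A] (E : Finset (S × A)) (v : S → ℝ) (e : A → ℝ)
    (hv : ∀ i, 0 ≤ v i) (he : ∀ j, 0 < e j)
    (f : S → A → ℝ) (hf : RatioBalanced E v e f)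
    (R : ℝ) (hRdef : R = Finset.univ.sup' Finset.univ_nonempty (riskRatio E e f))
    (hRpos : 0 < R) :
    ∑ i ∈ Finset.univ.filter
        (fun i : S => ∃ j : A, riskRatio E e f j = R ∧ 0 < f i j), v i =
      (1 - R) * ∑ j ∈ Finset.univ.filter (fun j : A => riskRatio E e f j = R), e j :=
  Sprime_value_eq_Aprime_inflow_general E v e he f hf R hRdef hRpos
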